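/- arXiv:2403.01565 — 4 statements merged into one kernel-verified Lean document; each statement's English description precedes it below -/
import Mathlib

section
/- Let {ρ_y}_{y∈Y} with ρ_y(n) := μ_y({f : |f| = n}) be tight, i.e., for every ε > 0 there exists n with μ_y({f : |f| ≤ n}) > 1 − ε for all y ∈ Y. Then the generating function G_μ : [0,1]^X → [0,1]^Y is uniformly continuous with respect to the sup-norm distances on [0,1]^X and [0,1]^Y. -/
/-!
On `[0,1]^X` each monomial `z ↦ ∏ₓ z x ^ f x` takes values in `[0,1]` and is Lipschitz for the
sup-norm with constant `|f| = ∑ₓ f x` (telescope the product). Split `G_μ(z|y) - G_μ(v|y)` into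
the terms with `|f| ≤ n` and the rest: the former contribute at most `n δ`, the latter at most the
mass `μ_y(|f| > n)`, which tightness makes small uniformly in `y`.
-/

open Finset

theorem Finset.prod_mem_Icc_zero_one {ι R : Type*} [CommSemiring R] [PartialOrder R]
    [IsOrderedRing R] {s : Finset ι} {a : ι → R} (ha : ∀ i ∈ s, a i ∈ Set.Icc 0 1) :
    ∏ i ∈ s, a i ∈ Set.Icc (0 : R) 1 :=
  ⟨prod_nonneg fun i hi => (ha i hi).1,
    prod_le_one (fun i hi => (ha i hi).1) fun i hi => (ha i hi).2⟩

theorem Finset.abs_prod_sub_prod_le_sum_abs_sub {ι R : Type*} [CommRing R] [LinearOrder R]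
    [IsStrictOrderedRing R] (s : Finset ι) {a b : ι → R} (ha : ∀ i ∈ s, a i ∈ Set.Icc 0 1)
    (hb : ∀ i ∈ s, b i ∈ Set.Icc 0 1) :
    |∏ i ∈ s, a i - ∏ i ∈ s, b i| ≤ ∑ i ∈ s, |a i - b i| := by
  induction s using Finset.cons_induction with
  | empty => simp
  | cons j s hj ih =>
    simp only [forall_mem_cons] at ha hb
    obtain ⟨⟨haj₀, haj₁⟩, ha⟩ := ha
    obtain ⟨-, hb⟩ := hb
    obtain ⟨hB₀, hB₁⟩ := prod_mem_Icc_zero_one hb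
    rw [prod_cons, prod_cons, sum_cons]
    calc |a j * ∏ i ∈ s, a i - b j * ∏ i ∈ s, b i|
        = |a j * (∏ i ∈ s, a i - ∏ i ∈ s, b i) + (a j - b j) * ∏ i ∈ s, b i| := by ring_nf
      _ ≤ a j * |∏ i ∈ s, a i - ∏ i ∈ s, b i| + |a j - b j| * ∏ i ∈ s, b i := by
        grw [abs_add_le, abs_mul, abs_mul, abs_of_nonneg haj₀, abs_of_nonneg hB₀]
      _ ≤ |a j - b j| + ∑ i ∈ s, |a i - b i| := by
        grw [mul_le_of_le_one_left (abs_nonneg _) haj₁, mul_le_of_le_one_right (abs_nonneg _) hB₁,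
          ih ha hb, add_comm]

theorem pow_mem_Icc_zero_one {R : Type*} [Semiring R] [PartialOrder R] [IsOrderedRing R]
    {a : R} (ha : a ∈ Set.Icc 0 1) (k : ℕ) : a ^ k ∈ Set.Icc (0 : R) 1 :=
  ⟨pow_nonneg ha.1 k, pow_le_one₀ ha.1 ha.2⟩

theorem abs_pow_sub_pow_le_of_mem_Icc {R : Type*} [CommRing R] [LinearOrder R]
    [IsStrictOrderedRing R] {a b : R} (ha : a ∈ Set.Icc 0 1) (hb : b ∈ Set.Icc 0 1) (k : ℕ) :
    |a ^ k - b ^ k| ≤ k * |a - b| := by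
  simpa using (range k).abs_prod_sub_prod_le_sum_abs_sub (fun _ _ => ha) (fun _ _ => hb)

section Monomial

variable {ι : Type*} {z v : ι → ℝ}

theorem Finsupp.prod_pow_mem_Icc (f : ι →₀ ℕ) (hz : ∀ x, z x ∈ Set.Icc (0 : ℝ) 1) :
    ∏ x ∈ f.support, z x ^ f x ∈ Set.Icc (0 : ℝ) 1 :=
  prod_mem_Icc_zero_one fun x _ => pow_mem_Icc_zero_one (hz x) _

theorem Finsupp.abs_prod_pow_sub_prod_pow_le (f : ι →₀ ℕ) {δ : ℝ}
    (hz : ∀ x, z x ∈ Set.Icc (0 : ℝ) 1) (hv : ∀ x, v x ∈ Set.Icc (0 : ℝ) 1)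
    (hzv : ∀ x, |z x - v x| ≤ δ) :
    |∏ x ∈ f.support, z x ^ f x - ∏ x ∈ f.support, v x ^ f x| ≤ (f.sum fun _ k => k) * δ := by
  calc |∏ x ∈ f.support, z x ^ f x - ∏ x ∈ f.support, v x ^ f x|
      ≤ ∑ x ∈ f.support, |z x ^ f x - v x ^ f x| :=
        f.support.abs_prod_sub_prod_le_sum_abs_sub (fun x _ => pow_mem_Icc_zero_one (hz x) _)
          (fun x _ => pow_mem_Icc_zero_one (hv x) _)
    _ ≤ ∑ x ∈ f.support, (f x : ℝ) * δ := by
        gcongr with x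
        exact (abs_pow_sub_pow_le_of_mem_Icc (hz x) (hv x) _).trans (by gcongr; exact hzv x)
    _ = (f.sum fun _ k => k) * δ := by rw [Finsupp.sum, Nat.cast_sum, Finset.sum_mul]

end Monomial

theorem abs_tsum_mul_sub_tsum_mul_le {α : Type*} {p g h : α → ℝ} {s : Set α} {η : ℝ}
    (hp : ∀ a, 0 ≤ p a) (hps : Summable p) (hη : 0 ≤ η) (hg : ∀ a, g a ∈ Set.Icc (0 : ℝ) 1)
    (hh : ∀ a, h a ∈ Set.Icc (0 : ℝ) 1) (hgh : ∀ a ∈ s, |g a - h a| ≤ η) :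
    |∑' a, p a * g a - ∑' a, p a * h a| ≤ η * ∑' a, p a + ∑' a : ↑sᶜ, p a := by
  have hsum : ∀ k : α → ℝ, (∀ a, k a ∈ Set.Icc (0 : ℝ) 1) → Summable fun a => p a * k a :=
    fun k hk => hps.of_nonneg_of_le (fun a => mul_nonneg (hp a) (hk a).1)
      fun a => mul_le_of_le_one_right (hp a) (hk a).2
  have hpoint : ∀ a, |p a * g a - p a * h a| ≤ η * p a + sᶜ.indicator p a := by
    intro a
    rw [← mul_sub, abs_mul, abs_of_nonneg (hp a)]
    by_cases ha : a ∈ s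
    · rw [Set.indicator_of_notMem (Set.notMem_compl_iff.2 ha), add_zero, mul_comm η]
      exact mul_le_mul_of_nonneg_left (hgh a ha) (hp a)
    · rw [Set.indicator_of_mem (Set.mem_compl ha)]
      have : |g a - h a| ≤ 1 := abs_sub_le_of_nonneg_of_le (hg a).1 (hg a).2 (hh a).1 (hh a).2
      nlinarith [hp a]
  have hdiff := (hsum g hg).sub (hsum h hh)
  calc |∑' a, p a * g a - ∑' a, p a * h a| = |∑' a, (p a * g a - p a * h a)| := by
        rw [(hsum g hg).tsum_sub (hsum h hh)]
    _ ≤ ∑' a, |p a * g a - p a * h a| := by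
        simpa only [Real.norm_eq_abs] using
          norm_tsum_le_tsum_norm (f := fun a => p a * g a - p a * h a) hdiff.abs
    _ ≤ ∑' a, (η * p a + sᶜ.indicator p a) :=
        hdiff.abs.tsum_le_tsum hpoint ((hps.mul_left η).add (hps.indicator _))
    _ = η * ∑' a, p a + ∑' a : ↑sᶜ, p a := by
        rw [(hps.mul_left η).tsum_add (hps.indicator _), tsum_mul_left, _root_.tsum_subtype]

theorem stmt8_general {X Y : Type*}
    (μ : Y → (X →₀ ℕ) → ℝ)
    (hnonneg : ∀ y f, 0 ≤ μ y f) (hprob : ∀ y, HasSum (μ y) 1)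
    (htight : ∀ ε : ℝ, 0 < ε → ∃ n : ℕ, ∀ y : Y,
      1 - ε < ∑' f : {f : X →₀ ℕ // (f.sum fun _ k => k) ≤ n}, μ y f) :
    ∀ ε : ℝ, 0 < ε → ∃ δ : ℝ, 0 < δ ∧
      ∀ z v : X → ℝ, (∀ x, z x ∈ Set.Icc (0 : ℝ) 1) →
        (∀ x, v x ∈ Set.Icc (0 : ℝ) 1) → (∀ x, |z x - v x| ≤ δ) →
        ∀ y : Y,
          |(∑' f : X →₀ ℕ, μ y f * ∏ x ∈ f.support, z x ^ f x) -
            ∑' f : X →₀ ℕ, μ y f * ∏ x ∈ f.support, v x ^ f x| ≤ ε := by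
  intro ε hε
  obtain ⟨n, hn⟩ := htight (ε / 2) (half_pos hε)
  refine ⟨ε / (2 * (n + 1)), by positivity, fun z v hz hv hzv y => ?_⟩
  set s : Set (X →₀ ℕ) := {f | (f.sum fun _ k => k) ≤ n}
  have hsum := (hprob y).summable
  have htail : ∑' f : ↑sᶜ, μ y f < ε / 2 := by
    have hmass : 1 - ε / 2 < ∑' f : ↑s, μ y f := hn y
    have hsplit := Summable.tsum_add_tsum_compl (s := s) (hsum.subtype _) (hsum.subtype _)
    linarith [(hprob y).tsum_eq]
  have hnδ : n * (ε / (2 * (n + 1))) ≤ ε / 2 := by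
    rw [mul_div_assoc', div_le_div_iff₀ (by positivity) two_pos]
    nlinarith
  have hclose : ∀ f ∈ s, |∏ x ∈ f.support, z x ^ f x - ∏ x ∈ f.support, v x ^ f x| ≤
      n * (ε / (2 * (n + 1))) := fun f hf =>
    (f.abs_prod_pow_sub_prod_pow_le hz hv hzv).trans (by gcongr; exact_mod_cast hf)
  calc _ ≤ n * (ε / (2 * (n + 1))) * ∑' f, μ y f + ∑' f : ↑sᶜ, μ y f :=
        abs_tsum_mul_sub_tsum_mul_le (hnonneg y) hsum (by positivity)
          (fun f => f.prod_pow_mem_Icc hz) (fun f => f.prod_pow_mem_Icc hv) hclose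
    _ ≤ ε := by rw [(hprob y).tsum_eq, mul_one]; linarith

/-- if the total-offspring laws are tight, then the generating
function is uniformly continuous with respect to sup-norm distances. -/
theorem stmt8 {X Y : Type*} [Countable X]
    (μ : Y → (X →₀ ℕ) → ℝ)
    (hnonneg : ∀ y f, 0 ≤ μ y f) (hprob : ∀ y, HasSum (μ y) 1)
    (htight : ∀ ε : ℝ, 0 < ε → ∃ n : ℕ, ∀ y : Y,
      1 - ε < ∑' f : {f : X →₀ ℕ // (f.sum fun _ k => k) ≤ n}, μ y f) :
    ∀ ε : ℝ, 0 < ε → ∃ δ : ℝ, 0 < δ ∧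
      ∀ z v : X → ℝ, (∀ x, z x ∈ Set.Icc (0 : ℝ) 1) →
        (∀ x, v x ∈ Set.Icc (0 : ℝ) 1) → (∀ x, |z x - v x| ≤ δ) →
        ∀ y : Y,
          |(∑' f : X →₀ ℕ, μ y f * ∏ x ∈ f.support, z x ^ f x) -
            ∑' f : X →₀ ℕ, μ y f * ∏ x ∈ f.support, v x ^ f x| ≤ ε :=
  stmt8_general μ hnonneg hprob htight
end

section
/- Consider the one-dimensional family of generating functions G(z|n) = 1 − pₙ + pₙ z(n+1) indexed by n ∈ ℕ, where pₙ ∈ (0,1) and ∑ₙ (1 − pₙ) < ∞. Then the vector q given by q(n) = 1 − ∏_{i≥n} pᵢ is a fixed point of G (i.e. G(q|n) = q(n) for all n), it satisfies q(n) < 1 for all n, and ∏_{i≥n} pᵢ → 1, so q(n) → 0 as n → ∞. -/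
open Filter Real

private lemma sum_log_tendsto {p : ℕ → ℝ} (hp : ∀ n, p n ∈ Set.Ioo (0 : ℝ) 1)
    (hsum : Summable fun n => 1 - p n) : Summable fun n => Real.log (p n) := by
  have htail : ∀ᶠ n in atTop, (1 : ℝ) - p n ≤ 1 / 2 := by
    have := hsum.tendsto_atTop_zero
    exact this.eventually (eventually_le_nhds (by norm_num))
  apply Summable.of_norm_bounded_eventually_nat (g := fun n => 2 * (1 - p n))
    (hsum.mul_left 2)
  filter_upwards [htail] with n hn
  have hp0 := (hp n).1
  have hp1 := (hp n).2
  have hhalf : (1 : ℝ) / 2 ≤ p n := by linarith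
  have hlogneg : Real.log (p n) ≤ 0 := Real.log_nonpos hp0.le hp1.le
  rw [Real.norm_eq_abs, abs_of_nonpos hlogneg]
  have : Real.log (p n)⁻¹ ≤ (p n)⁻¹ - 1 :=
    Real.log_le_sub_one_of_pos (by positivity)
  rw [Real.log_inv] at this
  have hinv : (p n)⁻¹ ≤ 2 := by
    rw [inv_le_comm₀ hp0 (by norm_num)]; linarith
  nlinarith [mul_inv_cancel₀ (ne_of_gt hp0)]

/-- for `G(z|n) = 1 - pₙ + pₙ z(n+1)`, the vector
`q(n) = 1 - ∏_{i ≥ n} pᵢ` is a fixed point, `q(n) < 1`, and `q(n) → 0`. -/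
theorem stmt13 (p : ℕ → ℝ) (hp : ∀ n, p n ∈ Set.Ioo (0 : ℝ) 1)
    (hsum : Summable fun n => 1 - p n) :
    (∀ n, 1 - p n + p n * (1 - ∏' i : ℕ, p (n + 1 + i)) = 1 - ∏' i : ℕ, p (n + i)) ∧
    (∀ n, (1 - ∏' i : ℕ, p (n + i)) < 1) ∧
    Tendsto (fun n => 1 - ∏' i : ℕ, p (n + i)) atTop (nhds 0) := by
  have hlog : Summable fun n => Real.log (p n) := sum_log_tendsto hp hsum
  have hlogn : ∀ n, Summable fun i => Real.log (p (n + i)) := fun n => by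
    refine ((summable_nat_add_iff n).2 hlog).congr fun i => by rw [add_comm]
  have hasP : ∀ n, HasProd (fun i => p (n + i))
      (Real.exp (∑' i, Real.log (p (n + i)))) := fun n => by
    refine ((hlogn n).hasSum.rexp).congr_fun fun i => ?_
    exact (Real.exp_log (hp (n + i)).1).symm
  have hm : ∀ n, Multipliable fun i => p (n + i) := fun n => ⟨_, hasP n⟩
  have hPeq : ∀ n, (∏' i, p (n + i)) = Real.exp (∑' i, Real.log (p (n + i))) :=
    fun n => (hasP n).tprod_eq
  have hPpos : ∀ n, 0 < ∏' i, p (n + i) := fun n => by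
    rw [hPeq n]; exact Real.exp_pos _
  refine ⟨fun n => ?_, fun n => by linarith [hPpos n], ?_⟩
  · have hsplit : (∏' i, p (n + i)) = p n * ∏' i, p (n + 1 + i) := by
      have h1 : Multipliable fun b : ℕ => p (n + (b + 1)) :=
        (hm (n + 1)).congr fun b => by ring_nf
      have := tprod_eq_zero_mul' (f := fun i => p (n + i)) h1
      simpa using this.trans (by
        congr 1
        exact tprod_congr fun b => by ring_nf)
    rw [hsplit]; ring
  · have hS : Tendsto (fun n => ∑' i, Real.log (p (n + i))) atTop (nhds 0) := by
      have := tendsto_sum_nat_add (fun n => Real.log (p n))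
      refine this.congr fun n => tsum_congr fun k => by rw [add_comm]
    have := (Real.continuous_exp.tendsto 0).comp hS
    rw [Real.exp_zero] at this
    have hP : Tendsto (fun n => ∏' i, p (n + i)) atTop (nhds 1) :=
      this.congr fun n => (hPeq n).symm
    have := (tendsto_const_nhds (x := (1:ℝ)) (f := atTop)).sub hP
    simpa using this
end

section
/- With pₙ ∈ (0,1), ∑ₙ(1−pₙ) < ∞, and G(z|n) = 1 − pₙ + pₙ z(n+1): for any z₀ ∈ (1 − ∏_{i=0}^∞ pᵢ, 1), the recursion z_{n+1} := 1 − (1 − zₙ)/pₙ defines a strictly decreasing sequence satisfying zₙ > 1 − ∏_{i=n}^∞ pᵢ > 0 for all n; consequently z(n) := zₙ is a fixed point of G with sup_n z(n) = z₀ < 1. -/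
/-!
In terms of `aₙ = 1 - zₙ` the recursion reads `aₙ₊₁ = aₙ / pₙ`, while the tail products
`Qₙ = ∏_{i ≥ n} pᵢ` satisfy `Qₙ = pₙ Qₙ₊₁`; hence the inequality `aₙ < Qₙ` propagates from
`n = 0` to every `n`. Since `0 < pₙ < 1`, the positive numbers `aₙ` strictly increase, so `zₙ`
strictly decreases and its supremum is `z₀`.
-/

lemma Real.multipliable_of_summable_one_sub {ι : Type*} {p : ι → ℝ}
    (hsum : Summable fun i => 1 - p i) : Multipliable p :=
  (Real.multipliable_one_add_of_summable hsum.neg).congr fun i => by ring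

lemma Real.tprod_le_one_of_nonneg_of_le_one {ι : Type*} {f : ι → ℝ} (h0 : ∀ i, 0 ≤ f i)
    (h1 : ∀ i, f i ≤ 1) : ∏' i, f i ≤ 1 := by
  by_cases hf : Multipliable f
  · exact le_of_tendsto' hf.hasProd fun s =>
      Finset.prod_le_one (fun i _ => h0 i) fun i _ => h1 i
  · rw [tprod_eq_one_of_not_multipliable hf]

lemma Real.tprod_nat_add_eq_mul_tprod {p : ℕ → ℝ} (hsum : Summable fun n => 1 - p n) (n : ℕ) :
    ∏' i, p (n + i) = p n * ∏' i, p (n + 1 + i) := by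
  have htail : Multipliable fun i => p (n + 1 + i) := by
    refine Real.multipliable_of_summable_one_sub ?_
    simpa only [add_comm] using (summable_nat_add_iff (f := fun n => 1 - p n) (n + 1)).mpr hsum
  rw [tprod_eq_zero_mul' (f := fun i => p (n + i)) (htail.congr fun i => by ring_nf), add_zero]
  exact congrArg _ (tprod_congr fun i => by ring_nf)

lemma Antitone.ciSup_eq_apply_zero {α : Type*} [ConditionallyCompleteLattice α] {f : ℕ → α}
    (hf : Antitone f) : ⨆ n, f n = f 0 :=
  le_antisymm (ciSup_le fun n => hf n.zero_le)
    (le_ciSup ⟨f 0, Set.forall_mem_range.2 fun n => hf n.zero_le⟩ 0)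

section Recursion

variable {p z : ℕ → ℝ}

lemma one_sub_succ_eq_div (hrec : ∀ n, z (n + 1) = 1 - (1 - z n) / p n) (n : ℕ) :
    1 - z (n + 1) = (1 - z n) / p n := by
  rw [hrec]; ring

lemma lt_one_of_rec (hp0 : ∀ n, 0 < p n) (hrec : ∀ n, z (n + 1) = 1 - (1 - z n) / p n)
    (h0 : z 0 < 1) (n : ℕ) : z n < 1 := by
  induction n with
  | zero => exact h0
  | succ n ih =>
    have : 0 < (1 - z n) / p n := div_pos (sub_pos.2 ih) (hp0 n)
    linarith [one_sub_succ_eq_div hrec n]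

lemma strictAnti_of_rec (hp0 : ∀ n, 0 < p n) (hp1 : ∀ n, p n < 1)
    (hrec : ∀ n, z (n + 1) = 1 - (1 - z n) / p n) (h0 : z 0 < 1) : StrictAnti z := by
  refine strictAnti_nat_of_succ_lt fun n => ?_
  have hpos : 0 < 1 - z n := sub_pos.2 (lt_one_of_rec hp0 hrec h0 n)
  have : 1 - z n < (1 - z n) / p n :=
    (lt_div_iff₀ (hp0 n)).2 (mul_lt_of_lt_one_right hpos (hp1 n))
  linarith [one_sub_succ_eq_div hrec n]

lemma one_sub_lt_of_rec (hp0 : ∀ n, 0 < p n) (hrec : ∀ n, z (n + 1) = 1 - (1 - z n) / p n)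
    {Q : ℕ → ℝ} (hQ : ∀ n, Q n = p n * Q (n + 1)) (h0 : 1 - Q 0 < z 0) (n : ℕ) :
    1 - Q n < z n := by
  induction n with
  | zero => exact h0
  | succ n ih =>
    have : (1 - z n) / p n < Q n / p n := div_lt_div_of_pos_right (by linarith) (hp0 n)
    rw [hQ n, mul_div_cancel_left₀ _ (hp0 n).ne'] at this
    linarith [one_sub_succ_eq_div hrec n]

lemma one_sub_add_mul_succ_of_rec (hp0 : ∀ n, p n ≠ 0)
    (hrec : ∀ n, z (n + 1) = 1 - (1 - z n) / p n) (n : ℕ) :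
    1 - p n + p n * z (n + 1) = z n := by
  rw [hrec, mul_sub, mul_div_cancel₀ _ (hp0 n)]; ring

end Recursion

/-- the recursion `z_{n+1} = 1 - (1 - zₙ)/pₙ` started in
`(1 - ∏ᵢ pᵢ, 1)` defines a strictly decreasing sequence with
`zₙ > 1 - ∏_{i ≥ n} pᵢ > 0`, giving a fixed point of `G` with
`sup_n zₙ = z₀ < 1`. -/
theorem stmt14 (p : ℕ → ℝ) (hp : ∀ n, p n ∈ Set.Ioo (0 : ℝ) 1)
    (hsum : Summable fun n => 1 - p n)
    (z : ℕ → ℝ)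
    (hz0 : z 0 ∈ Set.Ioo (1 - ∏' i : ℕ, p i) 1)
    (hrec : ∀ n, z (n + 1) = 1 - (1 - z n) / p n) :
    StrictAnti z ∧
    (∀ n, 1 - ∏' i : ℕ, p (n + i) < z n) ∧
    (∀ n, 0 < 1 - ∏' i : ℕ, p (n + i)) ∧
    (∀ n, 1 - p n + p n * z (n + 1) = z n) ∧
    (⨆ n, z n) = z 0 ∧ z 0 < 1 := by
  obtain ⟨hz0l, hz0u⟩ := hz0
  have hp0 : ∀ n, 0 < p n := fun n => (hp n).1
  have hanti := strictAnti_of_rec hp0 (fun n => (hp n).2) hrec hz0u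
  have htail := Real.tprod_nat_add_eq_mul_tprod hsum
  have htail_lt_one (n : ℕ) : ∏' i, p (n + i) < 1 := by
    have hle : ∏' i, p (n + 1 + i) ≤ 1 :=
      Real.tprod_le_one_of_nonneg_of_le_one (fun i => (hp _).1.le) fun i => (hp _).2.le
    rw [htail n]
    exact (mul_le_of_le_one_right (hp0 n).le hle).trans_lt (hp n).2
  refine ⟨hanti, one_sub_lt_of_rec hp0 hrec htail (by simpa using hz0l),
    fun n => sub_pos.2 (htail_lt_one n), one_sub_add_mul_succ_of_rec (fun n => (hp0 n).ne') hrec,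
    hanti.antitone.ciSup_eq_apply_zero, hz0u⟩
end

section
/- Let pₙ, rₙ > 0 with pₙ + rₙ < 1 for n ≥ 1, r₀ = 0, pₙ ∈ (0,1), and ∑ₙ(1−pₙ) < ∞. For z₀ ∈ (1 − ∏_{i=0}^∞ pᵢ, 1) define z₁ := 1 − (1 − z₀)/p₀ and z_{n+1} := 1 + (1 − z_{n−1}) rₙ/pₙ − (1 − zₙ)/pₙ for n ≥ 1. Then (zₙ) is strictly decreasing and satisfies 1 − ∏_{i=n}^∞ pᵢ < zₙ < z_{n−1} ≤ z₀ for all n ≥ 1; in particular all zₙ ∈ (0,1) and sup_n zₙ = z₀ < 1. -/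
/-!
Put `aₙ := 1 - zₙ` and `Qₙ := ∏_{i ≥ n} pᵢ`. The recursion becomes
`a₁ = a₀ / p₀`, `a_{n+2} = (a_{n+1} - aₙ r_{n+1}) / p_{n+1}`, and the tail products satisfy
`Qₙ = pₙ Q_{n+1}`. Since `p + r < 1`, the invariant `0 < aₙ < a_{n+1} < Q_{n+1}` propagates:
dividing by `p_{n+1}` pushes `a_{n+2}` above `a_{n+1}` and keeps it below `Q_{n+1} / p_{n+1}`.
-/

open Real

lemma Real.summable_log_of_summable_one_sub {ι : Type*} {p : ι → ℝ}
    (hsum : Summable fun i => 1 - p i) : Summable fun i => log (p i) := by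
  simpa using Real.summable_log_one_add_of_summable hsum.neg

lemma Real.tprod_le_one_of_summable_log {ι : Type*} {p : ι → ℝ} (hp : ∀ i, 0 < p i)
    (hp1 : ∀ i, p i ≤ 1) (hlog : Summable fun i => log (p i)) : ∏' i, p i ≤ 1 := by
  rw [← Real.rexp_tsum_eq_tprod hp hlog, exp_le_one_iff]
  exact tsum_nonpos fun i => log_nonpos (hp i).le (hp1 i)

lemma Real.tprod_nat_add_eq_mul_tprod_succ_add {p : ℕ → ℝ} (hp : ∀ n, 0 < p n)
    (hlog : Summable fun n => log (p n)) (n : ℕ) :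
    ∏' i, p (n + i) = p n * ∏' i, p (n + 1 + i) := by
  have htail : Multipliable fun i => p (n + (i + 1)) :=
    Real.multipliable_of_summable_log (fun i => hp _) <|
      ((summable_nat_add_iff (n + 1)).2 hlog).congr fun i => by
        rw [add_comm i, add_assoc, add_comm 1 i]
  rw [tprod_eq_zero_mul' (f := fun i => p (n + i)) htail, add_zero]
  congr 1
  exact tprod_congr fun i => by rw [add_assoc, add_comm 1]

lemma lt_div_and_div_lt_of_add_lt_one {p r a b q : ℝ} (hp : 0 < p) (hr : 0 ≤ r)
    (hpr : p + r < 1) (ha : 0 < a) (hab : a < b) (hbq : b < p * q) :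
    b < (b - a * r) / p ∧ (b - a * r) / p < q := by
  rw [lt_div_iff₀ hp, div_lt_iff₀ hp]
  constructor <;> nlinarith [mul_le_mul_of_nonneg_right hab.le hr]

section Recursion

variable {p r z Q : ℕ → ℝ}

theorem recursion_one_sub_invariant (hp : ∀ n, p n ∈ Set.Ioo (0 : ℝ) 1)
    (hr : ∀ n, 1 ≤ n → 0 < r n ∧ p n + r n < 1) (hQ : ∀ n, Q n = p n * Q (n + 1))
    (hz0 : z 0 ∈ Set.Ioo (1 - Q 0) 1) (hz1 : z 1 = 1 - (1 - z 0) / p 0)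
    (hrec : ∀ n, z (n + 2) =
      1 + (1 - z n) * r (n + 1) / p (n + 1) - (1 - z (n + 1)) / p (n + 1)) (n : ℕ) :
    0 < 1 - z n ∧ 1 - z n < 1 - z (n + 1) ∧ 1 - z (n + 1) < Q (n + 1) := by
  induction n with
  | zero =>
    obtain ⟨hQz, hz⟩ := hz0
    have hp0 := hp 0
    have ha1 : 1 - z 1 = (1 - z 0) / p 0 := by rw [hz1]; ring
    refine ⟨by linarith, ?_, ?_⟩ <;> rw [ha1]
    · rw [lt_div_iff₀ hp0.1]; nlinarith [hp0.2]
    · rw [div_lt_iff₀ hp0.1, mul_comm, ← hQ 0]; linarith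
  | succ n ih =>
    obtain ⟨ha, hab, hbQ⟩ := ih
    obtain ⟨hr, hpr⟩ := hr (n + 1) n.succ_pos
    have hp1 := (hp (n + 1)).1
    have hc : 1 - z (n + 2) = ((1 - z (n + 1)) - (1 - z n) * r (n + 1)) / p (n + 1) := by
      rw [hrec n]; field_simp; ring
    rw [hQ] at hbQ
    rw [hc]
    exact ⟨ha.trans hab, lt_div_and_div_lt_of_add_lt_one hp1 hr.le hpr ha hab hbQ⟩

end Recursion

theorem stmt15_general (p r : ℕ → ℝ) (hp : ∀ n, p n ∈ Set.Ioo (0 : ℝ) 1)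
    (hsum : Summable fun n => 1 - p n)
    (hr : ∀ n, 1 ≤ n → 0 < r n ∧ p n + r n < 1)
    (z : ℕ → ℝ)
    (hz0 : z 0 ∈ Set.Ioo (1 - ∏' i : ℕ, p i) 1)
    (hz1 : z 1 = 1 - (1 - z 0) / p 0)
    (hrec : ∀ n, z (n + 2) =
      1 + (1 - z n) * r (n + 1) / p (n + 1) - (1 - z (n + 1)) / p (n + 1)) :
    StrictAnti z ∧
    (∀ n, 1 - ∏' i : ℕ, p (n + i) < z n) ∧
    (∀ n, 0 < z n ∧ z n < 1) ∧
    (⨆ n, z n) = z 0 ∧ z 0 < 1 := by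
  have hlog := Real.summable_log_of_summable_one_sub hsum
  have hQ := Real.tprod_nat_add_eq_mul_tprod_succ_add (fun n => (hp n).1) hlog
  have key := recursion_one_sub_invariant (Q := fun n => ∏' i, p (n + i)) hp hr hQ
    (by simpa only [zero_add] using hz0) hz1 hrec
  have hanti : StrictAnti z := strictAnti_nat_of_succ_lt fun n => by linarith [(key n).2.1]
  have hlower : ∀ n, 1 - ∏' i, p (n + i) < z n
    | 0 => by simpa only [zero_add] using hz0.1
    | n + 1 => by linarith [(key n).2.2]
  have hQle : ∀ n, ∏' i, p (n + i) ≤ 1 := fun n =>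
    Real.tprod_le_one_of_summable_log (fun i => (hp _).1) (fun i => (hp _).2.le)
      ((summable_nat_add_iff n).2 hlog |>.congr fun i => by rw [add_comm])
  refine ⟨hanti, hlower, fun n => ⟨?_, by linarith [(key n).1]⟩, ?_, hz0.2⟩
  · linarith [hlower n, hQle n]
  · exact ciSup_eq_of_forall_le_of_forall_lt_exists_gt
      (fun n => hanti.antitone n.zero_le) fun _ hw => ⟨0, hw⟩

/-- the two-step recursion
`z_{n+1} = 1 + (1 - z_{n-1}) rₙ/pₙ - (1 - zₙ)/pₙ` started in
`(1 - ∏ᵢ pᵢ, 1)` is strictly decreasing and satisfies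
`1 - ∏_{i ≥ n} pᵢ < zₙ`, all `zₙ ∈ (0,1)`, and `sup_n zₙ = z₀ < 1`. -/
theorem stmt15 (p r : ℕ → ℝ) (hp : ∀ n, p n ∈ Set.Ioo (0 : ℝ) 1)
    (hsum : Summable fun n => 1 - p n)
    (hr0 : r 0 = 0)
    (hr : ∀ n, 1 ≤ n → 0 < r n ∧ p n + r n < 1)
    (z : ℕ → ℝ)
    (hz0 : z 0 ∈ Set.Ioo (1 - ∏' i : ℕ, p i) 1)
    (hz1 : z 1 = 1 - (1 - z 0) / p 0)
    (hrec : ∀ n, z (n + 2) =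
      1 + (1 - z n) * r (n + 1) / p (n + 1) - (1 - z (n + 1)) / p (n + 1)) :
    StrictAnti z ∧
    (∀ n, 1 - ∏' i : ℕ, p (n + i) < z n) ∧
    (∀ n, 0 < z n ∧ z n < 1) ∧
    (⨆ n, z n) = z 0 ∧ z 0 < 1 :=
  stmt15_general p r hp hsum hr z hz0 hz1 hrec
end
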